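/- arXiv:1511.06232 — 6 statements merged into one kernel-verified Lean document; each statement's English description precedes it below -/
import Mathlib

section
/- For every separable real Hilbert space H there exist a separable real Hilbert space E and an injective continuous linear map i : H → E with dense range which is Hilbert–Schmidt, i.e. there is a Hilbert basis (e_n)_{n∈ι} of H indexed by a countable type ι such that ∑_{n∈ι} ‖i(e_n)‖²_E < ∞. -/
/-!
Choose a Hilbert basis `(e n)` of `H`; it is countable because `H` is separable, so `H` is
isometric to `ℓ²(ι)` for a countable `ι`. Composing this isometry with the diagonal operator of a
nowhere-vanishing square-summable weight sequence `w` gives an injective map with dense range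
(its range contains every finitely supported sequence) sending `e n` to `w n • δₙ`, so
`∑ ‖i (e n)‖² = ∑ |w n|² < ∞`.
-/

open scoped ENNReal lp

section Orthonormal

variable {𝕜 E ι : Type*} [RCLike 𝕜] [NormedAddCommGroup E] [InnerProductSpace 𝕜 E]

theorem Orthonormal.norm_sub_sq_eq_two {v : ι → E} (hv : Orthonormal 𝕜 v) {i j : ι}
    (hij : i ≠ j) : ‖v i - v j‖ ^ 2 = 2 := by
  rw [@norm_sub_sq 𝕜, hv.1 i, hv.1 j, hv.2 hij]
  norm_num

theorem Orthonormal.countable [TopologicalSpace.SeparableSpace E] {v : ι → E}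
    (hv : Orthonormal 𝕜 v) : Countable ι := by
  -- the balls of radius `1 / 2` around the `v i` are disjoint, since `‖v i - v j‖ = √2`
  refine Pairwise.countable_of_isOpen_disjoint (s := fun i => Metric.ball (v i) (1 / 2))
    (fun i j hij => Metric.ball_disjoint_ball ?_) (fun _ => Metric.isOpen_ball)
    (fun _ => Metric.nonempty_ball.2 one_half_pos)
  have := hv.norm_sub_sq_eq_two hij
  rw [dist_eq_norm]
  nlinarith [norm_nonneg (v i - v j)]

variable (𝕜 E)

theorem HilbertBasis.exists_countable_index [CompleteSpace E]
    [TopologicalSpace.SeparableSpace E] :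
    ∃ (ι : Type) (_ : Countable ι), Nonempty (HilbertBasis ι 𝕜 E) := by
  obtain ⟨w, b, -⟩ := exists_hilbertBasis 𝕜 E
  have : Countable w := b.orthonormal.countable
  let e : Shrink.{0} w ≃ w := (equivShrink.{0} w).symm
  have hspan : ⊤ ≤ (Submodule.span 𝕜 (Set.range (b ∘ e))).topologicalClosure := by
    rw [e.surjective.range_comp, b.dense_span]
  exact ⟨Shrink.{0} w, Countable.of_equiv _ e.symm,
    ⟨HilbertBasis.mk (b.orthonormal.comp e e.injective) hspan⟩⟩

end Orthonormal

namespace lp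

theorem exists_pos_summable_sq (α : Type*) [Countable α] :
    ∃ w : ℓ^∞(α, ℝ), (∀ i, 0 < w i) ∧ Summable fun i => w i ^ 2 := by
  obtain ⟨ε, hε_pos, c, hc, hc_lt⟩ := NNReal.exists_pos_sum_of_countable one_ne_zero α
  have hε_le : ∀ i, (ε i : ℝ) ≤ 1 :=
    fun i => NNReal.coe_le_one.2 ((le_hasSum hc i fun _ _ => zero_le).trans hc_lt.le)
  have hbdd : Memℓp (fun i => (ε i : ℝ)) ∞ := by
    refine memℓp_infty_iff.2 ⟨1, ?_⟩
    rintro _ ⟨i, rfl⟩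
    simpa using hε_le i
  refine ⟨⟨_, hbdd⟩, fun i => hε_pos i, ?_⟩
  refine (NNReal.summable_coe.2 hc.summable).of_nonneg_of_le (fun _ => sq_nonneg _) fun i => ?_
  exact pow_le_of_le_one (ε i).2 (hε_le i) two_ne_zero

variable {α 𝕜 : Type*} {E : α → Type*} {p : ℝ≥0∞} [NormedField 𝕜]
  [∀ i, NormedAddCommGroup (E i)] [∀ i, NormedSpace 𝕜 (E i)]

theorem norm_smul_apply_le (w : ℓ^∞(α, 𝕜)) (f : ∀ i, E i) (i : α) :
    ‖w i • f i‖ ≤ ‖w‖ * ‖f i‖ :=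
  (norm_smul_le _ _).trans (by gcongr; exact norm_apply_le_norm ENNReal.top_ne_zero w i)

theorem memℓp_infty_smul (w : ℓ^∞(α, 𝕜)) (f : lp E p) : Memℓp (fun i => w i • f i) p :=
  (lp.memℓp f).norm.const_mul ‖w‖ |>.mono (norm_smul_apply_le w f)

variable [Fact (1 ≤ p)]

variable (p E) in
noncomputable def diagonal (w : ℓ^∞(α, 𝕜)) : lp E p →L[𝕜] lp E p :=
  LinearMap.mkContinuous
    { toFun := fun f => ⟨fun i => w i • f i, memℓp_infty_smul w f⟩
      map_add' := fun f g => by ext i; exact smul_add _ _ _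
      map_smul' := fun c f => by ext i; simp [smul_comm (w i) c] }
    ‖w‖ fun f => by
      -- compare pointwise with the sequence `‖w‖ * ‖f i‖`, whose norm is `‖w‖ * ‖f‖`
      rw [← norm_toNorm (x := f), ← Real.norm_of_nonneg (norm_nonneg w), ← norm_smul]
      refine norm_mono (zero_lt_one.trans_le Fact.out).ne' fun i => ?_
      exact (norm_smul_apply_le w f i).trans (Real.le_norm_self _)

@[simp]
theorem diagonal_apply (w : ℓ^∞(α, 𝕜)) (f : lp E p) (i : α) : diagonal E p w f i = w i • f i :=
  rfl

theorem diagonal_single [DecidableEq α] (w : ℓ^∞(α, 𝕜)) (i : α) (x : E i) :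
    diagonal E p w (lp.single p i x) = lp.single p i (w i • x) := by
  ext j
  by_cases hj : j = i
  · subst hj; simp
  · simp [hj]

theorem diagonal_injective {w : ℓ^∞(α, 𝕜)} (hw : ∀ i, w i ≠ 0) :
    Function.Injective (diagonal E p w) := by
  refine (injective_iff_map_eq_zero _).2 fun f hf => ?_
  ext i
  simpa [hw i] using congrArg (fun g : lp E p => g i) hf

theorem denseRange_diagonal (hp : p ≠ ∞) {w : ℓ^∞(α, 𝕜)} (hw : ∀ i, w i ≠ 0) :
    DenseRange (diagonal E p w) := by
  classical
  -- the range contains every `lp.single p i x`, and for `p < ∞` these span a dense subspace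
  have hsingle : ∀ i (x : E i), lp.single p i x ∈ (diagonal E p w).toLinearMap.range :=
    fun i x => ⟨lp.single p i ((w i)⁻¹ • x), by
      rw [ContinuousLinearMap.coe_coe, diagonal_single, smul_inv_smul₀ (hw i)]⟩
  refine fun f => mem_closure_of_tendsto (lp.hasSum_single hp f) (.of_forall fun s => ?_)
  exact Submodule.sum_mem _ fun i _ => hsingle i (f i)

end lp

/-- **Existence of a Gel'fand triple with Hilbert–Schmidt embedding.**
For every separable real Hilbert space `H` there exist a separable real Hilbert space `E`
and an injective continuous linear map `i : H → E` with dense range which is Hilbert–Schmidt,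
i.e. there is a Hilbert basis `(e n)` of `H` indexed by a countable type such that
`∑ n, ‖i (e n)‖ ^ 2 < ∞`. -/
theorem gelfand_triple_hilbert_schmidt
    (H : Type*) [NormedAddCommGroup H] [InnerProductSpace ℝ H]
    [CompleteSpace H] [TopologicalSpace.SeparableSpace H] :
    ∃ (E : Type) (_ : NormedAddCommGroup E) (_ : InnerProductSpace ℝ E),
      CompleteSpace E ∧ TopologicalSpace.SeparableSpace E ∧
      ∃ i : H →L[ℝ] E, Function.Injective i ∧ DenseRange i ∧
        ∃ (ι : Type) (_ : Countable ι) (e : HilbertBasis ι ℝ H),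
          Summable fun n : ι => ‖i (e n)‖ ^ 2 := by
  classical
  obtain ⟨ι, _, ⟨b⟩⟩ := HilbertBasis.exists_countable_index ℝ H
  obtain ⟨w, hw_pos, hw_sq⟩ := lp.exists_pos_summable_sq ι
  have hw : ∀ n, w n ≠ 0 := fun n => (hw_pos n).ne'
  let D := lp.diagonal (fun _ : ι => ℝ) 2 w
  let i : H →L[ℝ] ℓ²(ι, ℝ) := D.comp b.repr.toContinuousLinearEquiv.toContinuousLinearMap
  have hi_dense : DenseRange i :=
    (lp.denseRange_diagonal (p := 2) ENNReal.ofNat_ne_top hw).comp b.repr.surjective.denseRange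
      D.continuous
  have hi_basis : ∀ n, ‖i (b n)‖ = |w n| := fun n => by
    change ‖D (b.repr (b n))‖ = _
    rw [b.repr_self, lp.diagonal_single, lp.norm_single (by norm_num), smul_eq_mul, mul_one,
      Real.norm_eq_abs]
  refine ⟨ℓ²(ι, ℝ), inferInstance, inferInstance, inferInstance,
    hi_dense.separableSpace i.continuous, i, (lp.diagonal_injective hw).comp b.repr.injective,
    hi_dense, ι, inferInstance, b, ?_⟩
  simpa only [hi_basis, sq_abs] using hw_sq
end

section
/- Let E be a separable real Banach space. The σ-algebra on E generated by the family of ℂ-valued functions x ↦ exp(i·ξ(x)), where ξ ranges over the continuous real-linear functionals on E, coincides with the Borel σ-algebra of E. -/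
/-!
Characters are continuous, hence Borel. Conversely, a real function `f` is recovered from the
characters `exp (i c f)` as `f = lim N · arg (exp (i f / N))`, so every continuous functional is
measurable for the σ-algebra generated by the characters. By Hahn–Banach, a separable space carries
a sequence of functionals `ξₙ` of norm `≤ 1` with `‖x‖ = supₙ ξₙ x`; so the functions `‖· - a‖`, and
hence the balls, are measurable, and by Lindelöf every open set is a countable union of balls.
-/

open MeasureTheory Filter Topology Complex
open scoped Real

theorem tendsto_natCast_mul_arg_exp_I_mul_div (t : ℝ) :
    Tendsto (fun N : ℕ => N * arg (exp (I * ↑(t / N)))) atTop (𝓝 t) := by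
  -- the sequence is eventually constant: `arg (exp (I * s)) = s` for `s ∈ (-π, π]`
  refine tendsto_const_nhds.congr' ?_
  obtain ⟨N₀, hN₀⟩ := exists_nat_gt |t|
  filter_upwards [eventually_ge_atTop N₀] with N hN
  have hpos : (0 : ℝ) < N := (abs_nonneg t).trans_lt (hN₀.trans_le (by exact_mod_cast hN))
  have hsmall : |t / N| < π := by
    rw [abs_div, Nat.abs_cast, div_lt_iff₀ hpos]
    nlinarith [Real.pi_gt_three, abs_nonneg t, (show (N₀ : ℝ) ≤ N by exact_mod_cast hN)]
  rw [mul_comm I, arg_exp_mul_I, (toIocMod_eq_self _).2, mul_div_cancel₀ _ hpos.ne']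
  constructor <;> linarith [abs_lt.1 hsmall, Real.pi_pos]

theorem measurable_of_forall_measurable_exp_I_mul {α : Type*} {m : MeasurableSpace α} {f : α → ℝ}
    (hf : ∀ c : ℝ, Measurable[m] fun x => exp (I * ↑(c * f x))) : Measurable[m] f := by
  refine measurable_of_tendsto_metrizable (fun N => ?_)
    (tendsto_pi_nhds.2 fun x => tendsto_natCast_mul_arg_exp_I_mul_div (f x))
  simp_rw [div_eq_inv_mul]
  exact (measurable_arg.comp (hf _)).const_mul _

theorem exists_seq_strongDual_norm_eq_iSup (E : Type*) [NormedAddCommGroup E] [NormedSpace ℝ E]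
    [TopologicalSpace.SeparableSpace E] :
    ∃ ξ : ℕ → StrongDual ℝ E, ∀ x, ‖x‖ = ⨆ n, ξ n x := by
  choose ξ hξ_norm hξ_eq using fun n => exists_dual_vector'' ℝ (TopologicalSpace.denseSeq E n)
  have hle : ∀ n x, ξ n x ≤ ‖x‖ := fun n x =>
    (le_abs_self _).trans ((ξ n).le_of_opNorm_le (hξ_norm n) x |>.trans_eq (one_mul _))
  refine ⟨ξ, fun x => le_antisymm ?_ (ciSup_le fun n => hle n x)⟩
  refine le_of_forall_pos_le_add fun ε hε => ?_
  obtain ⟨n, hn⟩ := (TopologicalSpace.denseRange_denseSeq E).exists_dist_lt x (half_pos hε)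
  set u := TopologicalSpace.denseSeq E n
  have hdiff : |ξ n (x - u)| ≤ ‖x - u‖ :=
    (ξ n).le_of_opNorm_le (hξ_norm n) _ |>.trans_eq (one_mul _)
  have happrox : ‖x‖ ≤ ξ n x + ε := by
    have hsplit : ξ n x = ‖u‖ + ξ n (x - u) := by rw [map_sub, show ξ n u = ‖u‖ from hξ_eq n]; ring
    rw [dist_eq_norm] at hn
    linarith [norm_le_insert' x u, abs_le.1 hdiff]
  exact happrox.trans (add_le_add_left (le_ciSup ⟨‖x‖, by rintro _ ⟨k, rfl⟩; exact hle k x⟩ n) ε)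

theorem borel_le_of_forall_measurable_dist {α : Type*} [PseudoMetricSpace α]
    [SecondCountableTopology α] {m : MeasurableSpace α}
    (h : ∀ a, Measurable[m] fun x => dist x a) : borel α ≤ m := by
  refine MeasurableSpace.generateFrom_le fun s hs => ?_
  choose! r hr hrs using Metric.isOpen_iff.1 hs
  obtain ⟨T, -, hT, hunion⟩ := TopologicalSpace.isOpen_biUnion_countable s
    (fun x => Metric.ball x (r x)) fun x _ => Metric.isOpen_ball
  have hs_eq : s = ⋃ x ∈ T, Metric.ball x (r x) := by
    rw [hunion]
    refine subset_antisymm (fun x hx => ?_) (Set.iUnion₂_subset hrs)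
    exact Set.mem_biUnion hx (Metric.mem_ball_self (hr x hx))
  rw [hs_eq]
  exact MeasurableSet.biUnion hT fun x _ => (h x) measurableSet_Iio

theorem borel_le_of_forall_measurable_strongDual {E : Type*} [NormedAddCommGroup E]
    [NormedSpace ℝ E] [TopologicalSpace.SeparableSpace E] {m : MeasurableSpace E}
    (h : ∀ ξ : StrongDual ℝ E, Measurable[m] ξ) : borel E ≤ m := by
  obtain ⟨ξ, hξ⟩ := exists_seq_strongDual_norm_eq_iSup E
  refine borel_le_of_forall_measurable_dist fun a => ?_
  simp_rw [dist_eq_norm, hξ, map_sub]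
  exact Measurable.iSup fun n => (h (ξ n)).sub_const _

theorem sigmaAlgebra_generated_by_characters_eq_borel_general
    (E : Type*) [NormedAddCommGroup E] [NormedSpace ℝ E]
    [TopologicalSpace.SeparableSpace E]
    [MeasurableSpace E] [BorelSpace E] :
    (⨆ ξ : E →L[ℝ] ℝ,
      MeasurableSpace.comap (fun x : E => Complex.exp (Complex.I * (ξ x : ℂ)))
        (inferInstance : MeasurableSpace ℂ)) = (inferInstance : MeasurableSpace E) := by
  refine le_antisymm (iSup_le fun ξ => Measurable.comap_le ?_) ?_
  · exact (by fun_prop : Continuous fun x => exp (I * (ξ x : ℂ))).measurable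
  · refine BorelSpace.measurable_eq.trans_le <| borel_le_of_forall_measurable_strongDual fun ξ =>
      measurable_of_forall_measurable_exp_I_mul fun c => ?_
    exact Measurable.of_comap_le (le_iSup (fun ξ : E →L[ℝ] ℝ => MeasurableSpace.comap
      (fun x : E => exp (I * (ξ x : ℂ))) (inferInstance : MeasurableSpace ℂ)) (c • ξ))

/-- **The characters generate the Borel σ-algebra.**
Let `E` be a separable real Banach space. The σ-algebra on `E` generated by the family of
functions `x ↦ exp(i ξ x)`, `ξ` ranging over the continuous real-linear functionals on `E`,
coincides with the Borel σ-algebra of `E`. -/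
theorem sigmaAlgebra_generated_by_characters_eq_borel
    (E : Type*) [NormedAddCommGroup E] [NormedSpace ℝ E] [CompleteSpace E]
    [TopologicalSpace.SeparableSpace E]
    [MeasurableSpace E] [BorelSpace E] :
    (⨆ ξ : E →L[ℝ] ℝ,
      MeasurableSpace.comap (fun x : E => Complex.exp (Complex.I * (ξ x : ℂ)))
        (inferInstance : MeasurableSpace ℂ)) = (inferInstance : MeasurableSpace E) :=
  sigmaAlgebra_generated_by_characters_eq_borel_general E
end

section
/- Let 𝓗 be a nontrivial real Hilbert space, H ∈ (0,1), (Ω, ℱ, ℙ) a probability space, and X : 𝓗 → Ω → ℝ a stochastic process such that X(f) is square-integrable for every f ∈ 𝓗. Assume: (SS1) for every a > 0, every n ∈ ℕ and every f : Fin n → 𝓗, the law on ℝⁿ of ω ↦ (a^{−H}·X(a·f_i)(ω))_{i} equals the law of ω ↦ (X(f_i)(ω))_i; and (SI1) for every map ψ : 𝓗 → 𝓗 of the form ψ(f) = U(f) + h with U a linear isometric equivalence of 𝓗 and h ∈ 𝓗, and every n and f : Fin n → 𝓗, the law on ℝⁿ of ω ↦ (X(ψ(f_i))(ω) − X(ψ(0))(ω))_i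 equals the law of ω ↦ (X(f_i)(ω) − X(0)(ω))_i. Then E[X(f)] = 0 for every f ∈ 𝓗, and there exists σ² ≥ 0 (namely σ² = E[X(f₀)²] for any unit vector f₀, independent of the choice of f₀) such that for all f, g ∈ 𝓗: E[X(f)·X(g)] = σ² · ½(‖f‖^{2H} + ‖g‖^{2H} − ‖f − g‖^{2H}). -/
open MeasureTheory

/-!
Self-similarity at scale `2` forces `X 0 = 0` a.s.; after that the increment stationarity says
that `X (U f + h) - X h` has the law of `X f` for every isometry `U` and shift `h`. Taking
`U = -id` and the shift `-f` gives `E[X f] = -E[X f]`. Reflections make `E[X f ²]` depend only on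
`‖f‖`, and self-similarity makes it `σ² ‖f‖ ^ (2H)`. Finally `E[(X f - X g)²] = E[X (f - g)²]`,
and polarization yields the covariance.
-/

theorem ProbabilityTheory.IdentDistrib.of_map_pi_eq {Ω ι β : Type*} [MeasurableSpace Ω]
    [MeasurableSpace β] [Countable ι] {μ : Measure Ω} {Y Z : ι → Ω → β}
    (hY : ∀ i, AEMeasurable (Y i) μ) (hZ : ∀ i, AEMeasurable (Z i) μ)
    (h : μ.map (fun ω i => Y i ω) = μ.map (fun ω i => Z i ω)) (i : ι) :
    IdentDistrib (Y i) (Z i) μ μ :=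
  (⟨aemeasurable_pi_lambda _ hY, aemeasurable_pi_lambda _ hZ, h⟩ :
    IdentDistrib (fun ω i => Y i ω) (fun ω i => Z i ω) μ μ).comp (measurable_pi_apply i)

theorem integral_mul_eq_polarization {Ω : Type*} [MeasurableSpace Ω] {μ : Measure Ω}
    {Y Z : Ω → ℝ} (hY : MemLp Y 2 μ) (hZ : MemLp Z 2 μ) :
    ∫ ω, Y ω * Z ω ∂μ =
      (∫ ω, Y ω ^ 2 ∂μ + ∫ ω, Z ω ^ 2 ∂μ - ∫ ω, (Y ω - Z ω) ^ 2 ∂μ) / 2 := by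
  have hpointwise :
      (fun ω => Y ω * Z ω) = fun ω => (Y ω ^ 2 + Z ω ^ 2 - (Y ω - Z ω) ^ 2) / 2 := by
    ext ω
    ring
  have hsum : Integrable (fun ω => Y ω ^ 2 + Z ω ^ 2) μ := hY.integrable_sq.add hZ.integrable_sq
  have hdiff : Integrable (fun ω => (Y ω - Z ω) ^ 2) μ := (hY.sub hZ).integrable_sq
  rw [hpointwise, integral_div, integral_sub hsum hdiff,
    integral_add hY.integrable_sq hZ.integrable_sq]

section

-- Scoped here: the notation `ℙ` of `ProbabilityTheory` would capture the measure `ℙ` below.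
open ProbabilityTheory

variable {E Ω : Type*} [MeasurableSpace Ω]

section SelfSimilar

variable [AddCommGroup E] [Module ℝ E]

def IsSelfSimilar (H : ℝ) (X : E → Ω → ℝ) (μ : Measure Ω) : Prop :=
  ∀ a : ℝ, 0 < a → ∀ (n : ℕ) (f : Fin n → E),
    μ.map (fun ω i => a ^ (-H) * X (a • f i) ω) = μ.map (fun ω i => X (f i) ω)

variable {H : ℝ} {X : E → Ω → ℝ} {μ : Measure Ω}

theorem IsSelfSimilar.identDistrib (hSS : IsSelfSimilar H X μ)
    (hX : ∀ f, AEMeasurable (X f) μ) {a : ℝ} (ha : 0 < a) (f : E) :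
    IdentDistrib (fun ω => a ^ (-H) * X (a • f) ω) (X f) μ μ :=
  IdentDistrib.of_map_pi_eq (Y := fun _ : Fin 1 => _) (Z := fun _ => X f)
    (fun _ => (hX _).const_mul _) (fun _ => hX f) (hSS a ha 1 fun _ => f) 0

theorem IsSelfSimilar.integral_sq_smul (hSS : IsSelfSimilar H X μ)
    (hX : ∀ f, AEMeasurable (X f) μ) {a : ℝ} (ha : 0 < a) (f : E) :
    ∫ ω, X (a • f) ω ^ 2 ∂μ = a ^ (2 * H) * ∫ ω, X f ω ^ 2 ∂μ := by
  have h := ((hSS.identDistrib hX ha f).comp (u := fun x : ℝ => x ^ 2) (by fun_prop)).integral_eq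
  simp only [Function.comp_def, mul_pow, integral_const_mul] at h
  rw [← h, ← mul_assoc, ← Real.rpow_natCast, ← Real.rpow_mul ha.le, ← Real.rpow_add ha,
    show 2 * H + -H * (2 : ℕ) = 0 by push_cast; ring, Real.rpow_zero, one_mul]

theorem IsSelfSimilar.apply_zero_ae_eq_zero (hSS : IsSelfSimilar H X μ) (hH : H ≠ 0)
    (hX : ∀ f, AEMeasurable (X f) μ) (hX0 : Integrable (fun ω => X 0 ω ^ 2) μ) :
    X 0 =ᵐ[μ] 0 := by
  have h := hSS.integral_sq_smul hX two_pos 0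
  rw [smul_zero] at h
  have h2 : (2 : ℝ) ^ (2 * H) ≠ 1 := by
    intro h2H
    rw [← Real.rpow_zero 2, Real.rpow_right_inj two_pos (by norm_num)] at h2H
    exact hH (by linarith)
  have hzero : ∫ ω, X 0 ω ^ 2 ∂μ = 0 := by
    by_contra hne
    exact h2 (by simpa [hne] using ((mul_eq_right₀ hne).mp h.symm))
  filter_upwards [(integral_eq_zero_iff_of_nonneg (fun ω => sq_nonneg (X 0 ω)) hX0).mp hzero]
    with ω hω
  simpa using hω

end SelfSimilar

section IncrementStationary

variable [NormedAddCommGroup E] [NormedSpace ℝ E]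

def IsStronglyIncrementStationary (X : E → Ω → ℝ) (μ : Measure Ω) : Prop :=
  ∀ (U : E ≃ₗᵢ[ℝ] E) (h : E) (n : ℕ) (f : Fin n → E),
    μ.map (fun ω i => X (U (f i) + h) ω - X (U 0 + h) ω) = μ.map (fun ω i => X (f i) ω - X 0 ω)

variable {X : E → Ω → ℝ} {μ : Measure Ω}

namespace IsStronglyIncrementStationary

theorem identDistrib_sub (hSI : IsStronglyIncrementStationary X μ)
    (hX : ∀ f, AEMeasurable (X f) μ) (hX0 : X 0 =ᵐ[μ] 0) (U : E ≃ₗᵢ[ℝ] E) (h f : E) :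
    IdentDistrib (fun ω => X (U f + h) ω - X h ω) (X f) μ μ := by
  have hincr := IdentDistrib.of_map_pi_eq
    (Y := fun _ : Fin 1 => fun ω => X (U f + h) ω - X (U 0 + h) ω)
    (Z := fun _ => fun ω => X f ω - X 0 ω) (fun _ => (hX _).sub (hX _))
    (fun _ => (hX f).sub (hX 0)) (hSI U h 1 fun _ => f) 0
  rw [map_zero, zero_add] at hincr
  refine hincr.trans (.of_ae_eq ((hX f).sub (hX 0)) ?_)
  filter_upwards [hX0] with ω hω
  simp [hω]

theorem identDistrib_isometry (hSI : IsStronglyIncrementStationary X μ)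
    (hX : ∀ f, AEMeasurable (X f) μ) (hX0 : X 0 =ᵐ[μ] 0) (U : E ≃ₗᵢ[ℝ] E) (f : E) :
    IdentDistrib (X (U f)) (X f) μ μ := by
  refine .trans (.of_ae_eq (hX _) ?_) (hSI.identDistrib_sub hX hX0 U 0 f)
  filter_upwards [hX0] with ω hω
  simp [hω]

theorem integral_eq_zero (hSI : IsStronglyIncrementStationary X μ)
    (hX : ∀ f, AEMeasurable (X f) μ) (hX0 : X 0 =ᵐ[μ] 0) (f : E) : ∫ ω, X f ω ∂μ = 0 := by
  have hneg : ∫ ω, X (-f) ω ∂μ = ∫ ω, X f ω ∂μ :=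
    (hSI.identDistrib_isometry hX hX0 (LinearIsometryEquiv.neg ℝ) f).integral_eq
  have hshift := (hSI.identDistrib_sub hX hX0 (LinearIsometryEquiv.refl ℝ E) (-f) f).integral_eq
  have hX0neg : (fun ω => X 0 ω - X (-f) ω) =ᵐ[μ] fun ω => -X (-f) ω := by
    filter_upwards [hX0] with ω hω
    simp [hω]
  simp only [LinearIsometryEquiv.coe_refl, id, add_neg_cancel] at hshift
  rw [integral_congr_ae hX0neg, integral_neg] at hshift
  linarith

theorem integral_sq_sub (hSI : IsStronglyIncrementStationary X μ)
    (hX : ∀ f, AEMeasurable (X f) μ) (hX0 : X 0 =ᵐ[μ] 0) (f g : E) :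
    ∫ ω, (X f ω - X g ω) ^ 2 ∂μ = ∫ ω, X (f - g) ω ^ 2 ∂μ := by
  have h := ((hSI.identDistrib_sub hX hX0 (LinearIsometryEquiv.refl ℝ E) g (f - g)).comp
    (u := fun x : ℝ => x ^ 2) (by fun_prop)).integral_eq
  simpa only [Function.comp_def, LinearIsometryEquiv.coe_refl, id, sub_add_cancel] using h

end IsStronglyIncrementStationary

end IncrementStationary

section InnerProductSpace

variable [NormedAddCommGroup E] [InnerProductSpace ℝ E] {X : E → Ω → ℝ} {μ : Measure Ω}

namespace IsStronglyIncrementStationary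

theorem identDistrib_of_norm_eq (hSI : IsStronglyIncrementStationary X μ)
    (hX : ∀ f, AEMeasurable (X f) μ) (hX0 : X 0 =ᵐ[μ] 0) {f g : E} (hfg : ‖f‖ = ‖g‖) :
    IdentDistrib (X f) (X g) μ μ := by
  have h := hSI.identDistrib_isometry hX hX0 (Submodule.reflection (ℝ ∙ (f - g))ᗮ) f
  rw [Submodule.reflection_sub hfg] at h
  exact h.symm

theorem integral_sq_eq_of_norm_eq (hSI : IsStronglyIncrementStationary X μ)
    (hX : ∀ f, AEMeasurable (X f) μ) (hX0 : X 0 =ᵐ[μ] 0) {f g : E} (hfg : ‖f‖ = ‖g‖) :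
    ∫ ω, X f ω ^ 2 ∂μ = ∫ ω, X g ω ^ 2 ∂μ :=
  ((hSI.identDistrib_of_norm_eq hX hX0 hfg).comp (u := fun x : ℝ => x ^ 2)
    (by fun_prop)).integral_eq

end IsStronglyIncrementStationary

theorem IsSelfSimilar.integral_sq_eq {H : ℝ} (hSS : IsSelfSimilar H X μ)
    (hSI : IsStronglyIncrementStationary X μ) (hH : H ≠ 0) (hX : ∀ f, AEMeasurable (X f) μ)
    (hX0 : X 0 =ᵐ[μ] 0) {e : E} (he : ‖e‖ = 1) (f : E) :
    ∫ ω, X f ω ^ 2 ∂μ = (∫ ω, X e ω ^ 2 ∂μ) * ‖f‖ ^ (2 * H) := by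
  rcases eq_or_ne f 0 with rfl | hf
  · rw [norm_zero, Real.zero_rpow (by simpa using hH), mul_zero, integral_congr_ae (g := 0)]
    · simp
    · filter_upwards [hX0] with ω hω
      simp [hω]
  · have hf' : 0 < ‖f‖ := norm_pos_iff.mpr hf
    have hunit : ‖‖f‖⁻¹ • f‖ = ‖e‖ := by
      rw [he, norm_smul, norm_inv, norm_norm, inv_mul_cancel₀ hf'.ne']
    rw [mul_comm, ← hSI.integral_sq_eq_of_norm_eq hX hX0 hunit, ← hSS.integral_sq_smul hX hf',
      smul_inv_smul₀ hf'.ne']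

end InnerProductSpace

end

theorem L2fBm_characterization_strong_general
    (𝓗 : Type*) [NormedAddCommGroup 𝓗] [InnerProductSpace ℝ 𝓗]
    [Nontrivial 𝓗]
    (H : ℝ) (hH : H ∈ Set.Ioo (0 : ℝ) 1)
    (Ω : Type*) [MeasurableSpace Ω] (ℙ : Measure Ω)
    (X : 𝓗 → Ω → ℝ)
    (hX : ∀ f : 𝓗, MemLp (X f) 2 ℙ)
    (hSS1 : ∀ a : ℝ, 0 < a → ∀ (n : ℕ) (f : Fin n → 𝓗),
      Measure.map (fun ω => fun i => a ^ (-H) * X (a • f i) ω) ℙ =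
        Measure.map (fun ω => fun i => X (f i) ω) ℙ)
    (hSI1 : ∀ (U : 𝓗 ≃ₗᵢ[ℝ] 𝓗) (h : 𝓗) (n : ℕ) (f : Fin n → 𝓗),
      Measure.map (fun ω => fun i => X (U (f i) + h) ω - X (U 0 + h) ω) ℙ =
        Measure.map (fun ω => fun i => X (f i) ω - X 0 ω) ℙ) :
    (∀ f : 𝓗, ∫ ω, X f ω ∂ℙ = 0) ∧
    ∃ σ2 : ℝ, 0 ≤ σ2 ∧
      (∀ f₀ : 𝓗, ‖f₀‖ = 1 → ∫ ω, X f₀ ω ^ 2 ∂ℙ = σ2) ∧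
      (∀ f g : 𝓗, ∫ ω, X f ω * X g ω ∂ℙ =
        σ2 * ((‖f‖ ^ (2 * H) + ‖g‖ ^ (2 * H) - ‖f - g‖ ^ (2 * H)) / 2)) := by
  have hSS : IsSelfSimilar H X ℙ := hSS1
  have hSI : IsStronglyIncrementStationary X ℙ := hSI1
  have hH0 : H ≠ 0 := hH.1.ne'
  have hXm : ∀ f, AEMeasurable (X f) ℙ := fun f => (hX f).aemeasurable
  have hX0 : X 0 =ᵐ[ℙ] 0 := hSS.apply_zero_ae_eq_zero hH0 hXm (hX 0).integrable_sq
  obtain ⟨e, he⟩ := exists_norm_eq 𝓗 zero_le_one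
  refine ⟨hSI.integral_eq_zero hXm hX0, ∫ ω, X e ω ^ 2 ∂ℙ, integral_nonneg fun _ => sq_nonneg _,
    fun f₀ hf₀ => hSI.integral_sq_eq_of_norm_eq hXm hX0 (hf₀.trans he.symm), fun f g => ?_⟩
  rw [integral_mul_eq_polarization (hX f) (hX g), hSI.integral_sq_sub hXm hX0,
    hSS.integral_sq_eq hSI hH0 hXm hX0 he f, hSS.integral_sq_eq hSI hH0 hXm hX0 he g,
    hSS.integral_sq_eq hSI hH0 hXm hX0 he (f - g)]
  ring

/-- **Characterization of the `L²`-indexed fractional Brownian motion, first version.**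
A Gaussian-free statement of Proposition 3.2: if a square-integrable process `X` indexed by a
nontrivial real Hilbert space `𝓗` is `H`-self-similar (SS1) and strongly `L²`-increment
stationary (SI1), then it is centered and its covariance is
`σ² ½(‖f‖^{2H} + ‖g‖^{2H} − ‖f − g‖^{2H})` where `σ² = E[X f₀ ²]` for any unit vector `f₀`. -/
theorem L2fBm_characterization_strong
    (𝓗 : Type*) [NormedAddCommGroup 𝓗] [InnerProductSpace ℝ 𝓗] [CompleteSpace 𝓗]
    [Nontrivial 𝓗]
    (H : ℝ) (hH : H ∈ Set.Ioo (0 : ℝ) 1)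
    (Ω : Type*) [MeasurableSpace Ω] (ℙ : Measure Ω) [IsProbabilityMeasure ℙ]
    (X : 𝓗 → Ω → ℝ)
    (hX : ∀ f : 𝓗, MemLp (X f) 2 ℙ)
    (hSS1 : ∀ a : ℝ, 0 < a → ∀ (n : ℕ) (f : Fin n → 𝓗),
      Measure.map (fun ω => fun i => a ^ (-H) * X (a • f i) ω) ℙ =
        Measure.map (fun ω => fun i => X (f i) ω) ℙ)
    (hSI1 : ∀ (U : 𝓗 ≃ₗᵢ[ℝ] 𝓗) (h : 𝓗) (n : ℕ) (f : Fin n → 𝓗),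
      Measure.map (fun ω => fun i => X (U (f i) + h) ω - X (U 0 + h) ω) ℙ =
        Measure.map (fun ω => fun i => X (f i) ω - X 0 ω) ℙ) :
    (∀ f : 𝓗, ∫ ω, X f ω ∂ℙ = 0) ∧
    ∃ σ2 : ℝ, 0 ≤ σ2 ∧
      (∀ f₀ : 𝓗, ‖f₀‖ = 1 → ∫ ω, X f₀ ω ^ 2 ∂ℙ = σ2) ∧
      (∀ f g : 𝓗, ∫ ω, X f ω * X g ω ∂ℙ =
        σ2 * ((‖f‖ ^ (2 * H) + ‖g‖ ^ (2 * H) - ‖f - g‖ ^ (2 * H)) / 2)) :=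
  L2fBm_characterization_strong_general 𝓗 H hH Ω ℙ X hX hSS1 hSI1
end

section
/- Let 𝓗 be a nontrivial real Hilbert space, H ∈ (0,1), (Ω, ℱ, ℙ) a probability space, and X : 𝓗 → Ω → ℝ a stochastic process such that X(f) is square-integrable for every f. Let 𝒢 be the set of continuous linear bijections φ : 𝓗 → 𝓗 such that ‖f‖ = ‖g‖ implies ‖φ(f)‖ = ‖φ(g)‖, and set ρ(φ) = ‖φ‖_op². Assume: (SS2) for every φ ∈ 𝒢, every n and every f : Fin n → 𝓗, the law on ℝⁿ of ω ↦ (X(φ(f_i))(ω))_i equals the law of ω ↦ (ρ(φ)^H · X(f_i)(ω))_i; and (SI2) for every h ∈ 𝓗, every n and all f, g : Fin n → 𝓗, the law on ℝⁿ of ω ↦ (X(f_i + h)(ω) − X(g_i + h)(ω))_i equals the law of ω ↦ (X(f_i)(ω) − X(g_i)(ω))_i. Then E[X(f)] = 0 for every f ∈ 𝓗, and there exists σ² ≥ 0 (namely σ² = E[X(f₀)²] for any unit vector f₀, independent of the choice) such that for all f, g ∈ 𝓗: E[X(f)·X(g)] = σ² · ½(‖f‖^{4H} + ‖g‖^{4H}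 − ‖f − g‖^{4H}). -/
/-!
Self-similarity under the maps `r • id` (with `ρ = r²`) and under reflections (isometries,
`ρ = 1`) shows that `X f` has the law of `‖f‖ ^ (2H) • X f₀` for any unit vector `f₀`, and that
`X 0 = 0` a.s. since `H > 0`. Stationarity of the increments then gives `X (f - g) ∼ X f - X g`.
Taking `g = -f` yields `2 ^ (2H) E[X f] = E[X (2 • f)] = E[X f] - E[X (-f)] = 0`, and polarization
turns `E[(X f - X g)²] = σ² ‖f - g‖ ^ (4H)` into the covariance.
-/

open MeasureTheory

section

-- Opened only here: its notation `ℙ` would capture the binder `ℙ` of the final theorem.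
open ProbabilityTheory

lemma identDistrib_of_map_const_eq {Ω Ω' α ι : Type*} [MeasurableSpace Ω] [MeasurableSpace Ω']
    [MeasurableSpace α] [Nonempty ι] {μ : Measure Ω} {ν : Measure Ω'} {u : Ω → α} {v : Ω' → α}
    (hu : AEMeasurable u μ) (hv : AEMeasurable v ν)
    (h : μ.map (fun ω (_ : ι) => u ω) = ν.map (fun ω _ => v ω)) : IdentDistrib u v μ ν := by
  refine ⟨hu, hv, ?_⟩
  obtain ⟨i⟩ := ‹Nonempty ι›
  have hconst : Measurable fun (x : α) (_ : ι) => x := measurable_pi_lambda _ fun _ => measurable_id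
  have heval : Measurable fun x : ι → α => x i := measurable_pi_apply i
  calc μ.map u = (μ.map fun ω (_ : ι) => u ω).map fun x => x i :=
        (heval.aemeasurable.map_map_of_aemeasurable (hconst.comp_aemeasurable hu)).symm
    _ = (ν.map fun ω (_ : ι) => v ω).map fun x => x i := by rw [h]
    _ = ν.map v := heval.aemeasurable.map_map_of_aemeasurable (hconst.comp_aemeasurable hv)

lemma integral_mul_eq_integral_sq_add_integral_sq_sub_integral_sub_sq_div_two {Ω : Type*}
    [MeasurableSpace Ω] {μ : Measure Ω} {u v : Ω → ℝ}
    (hu : MemLp u 2 μ) (hv : MemLp v 2 μ) :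
    ∫ ω, u ω * v ω ∂μ = (∫ ω, u ω ^ 2 ∂μ + ∫ ω, v ω ^ 2 ∂μ - ∫ ω, (u ω - v ω) ^ 2 ∂μ) / 2 := by
  have huv : Integrable (fun ω => 2 * (u ω * v ω)) μ := (hu.integrable_mul hv).const_mul 2
  have hexpand : ∫ ω, (u ω - v ω) ^ 2 ∂μ
      = ∫ ω, u ω ^ 2 ∂μ - 2 * ∫ ω, u ω * v ω ∂μ + ∫ ω, v ω ^ 2 ∂μ := by
    have hpt : ∀ ω, (u ω - v ω) ^ 2 = u ω ^ 2 - 2 * (u ω * v ω) + v ω ^ 2 := fun ω => by ring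
    simp_rw [hpt]
    rw [integral_add (f := fun ω => u ω ^ 2 - 2 * (u ω * v ω)) (hu.integrable_sq.sub huv)
      hv.integrable_sq, integral_sub hu.integrable_sq huv, integral_const_mul]
  linarith

lemma ProbabilityTheory.IdentDistrib.integral_sq_eq {Ω Ω' : Type*} [MeasurableSpace Ω]
    [MeasurableSpace Ω'] {μ : Measure Ω} {ν : Measure Ω'} {u : Ω → ℝ} {v : Ω' → ℝ}
    (h : IdentDistrib u v μ ν) : ∫ ω, u ω ^ 2 ∂μ = ∫ ω, v ω ^ 2 ∂ν :=
  (h.comp (measurable_id.pow_const 2)).integral_eq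

/-- Strong `H`-self-similarity (SS2), with `ρ(φ) = ‖φ‖²`. -/
def IsStronglySelfSimilar {𝓗 Ω : Type*} [NormedAddCommGroup 𝓗] [NormedSpace ℝ 𝓗]
    [MeasurableSpace Ω] (X : 𝓗 → Ω → ℝ) (H : ℝ) (μ : Measure Ω) : Prop :=
  ∀ φ : 𝓗 →L[ℝ] 𝓗, Function.Bijective φ → (∀ f g : 𝓗, ‖f‖ = ‖g‖ → ‖φ f‖ = ‖φ g‖) →
    ∀ (n : ℕ) (f : Fin n → 𝓗),
      Measure.map (fun ω => fun i => X (φ (f i)) ω) μ =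
        Measure.map (fun ω => fun i => (‖φ‖ ^ 2) ^ H * X (f i) ω) μ

/-- Weak increment stationarity (SI2). -/
def HasStationaryIncrements {G Ω : Type*} [AddCommGroup G] [MeasurableSpace Ω]
    (X : G → Ω → ℝ) (μ : Measure Ω) : Prop :=
  ∀ (h : G) (n : ℕ) (f g : Fin n → G),
    Measure.map (fun ω => fun i => X (f i + h) ω - X (g i + h) ω) μ =
      Measure.map (fun ω => fun i => X (f i) ω - X (g i) ω) μ

lemma HasStationaryIncrements.identDistrib_sub {G Ω : Type*} [AddCommGroup G] [MeasurableSpace Ω]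
    {X : G → Ω → ℝ} {μ : Measure Ω} (hX : HasStationaryIncrements X μ)
    (hXm : ∀ f, AEMeasurable (X f) μ) (h0 : X 0 =ᵐ[μ] 0) (f g : G) :
    IdentDistrib (X (f - g)) (fun ω => X f ω - X g ω) μ μ := by
  have h := hX (-g) 1 (fun _ => f) (fun _ => g)
  simp only [← sub_eq_add_neg, sub_self] at h
  have hshift : IdentDistrib (fun ω => X (f - g) ω - X 0 ω) (fun ω => X f ω - X g ω) μ μ :=
    identDistrib_of_map_const_eq ((hXm _).sub (hXm 0)) ((hXm f).sub (hXm g)) (ι := Fin 1) h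
  refine IdentDistrib.trans (IdentDistrib.of_ae_eq (hXm _) ?_) hshift
  filter_upwards [h0] with ω hω
  simp [hω]

namespace IsStronglySelfSimilar

variable {𝓗 Ω : Type*} [NormedAddCommGroup 𝓗] [MeasurableSpace Ω] {X : 𝓗 → Ω → ℝ} {H : ℝ}
  {μ : Measure Ω}

section NormedSpace

variable [NormedSpace ℝ 𝓗]

lemma identDistrib_apply (hX : IsStronglySelfSimilar X H μ) (hXm : ∀ f, AEMeasurable (X f) μ)
    {φ : 𝓗 →L[ℝ] 𝓗} (hφ : Function.Bijective φ) (hφ_norm : ∀ f g : 𝓗, ‖f‖ = ‖g‖ → ‖φ f‖ = ‖φ g‖)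
    (f : 𝓗) : IdentDistrib (X (φ f)) (fun ω => (‖φ‖ ^ 2) ^ H * X f ω) μ μ :=
  identDistrib_of_map_const_eq (ι := Fin 1) (hXm _) ((hXm f).const_mul _)
    (hX φ hφ hφ_norm 1 fun _ => f)

lemma identDistrib_smul [Nontrivial 𝓗] (hX : IsStronglySelfSimilar X H μ)
    (hXm : ∀ f, AEMeasurable (X f) μ) {r : ℝ} (hr : 0 < r) (f : 𝓗) :
    IdentDistrib (X (r • f)) (fun ω => r ^ (2 * H) * X f ω) μ μ := by
  have hnorm : ‖r • ContinuousLinearMap.id ℝ 𝓗‖ = r := by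
    rw [norm_smul, ContinuousLinearMap.norm_id, mul_one, Real.norm_of_nonneg hr.le]
  have hrpow : (r ^ 2) ^ H = r ^ (2 * H) := by
    rw [← Real.rpow_natCast, ← Real.rpow_mul hr.le, Nat.cast_ofNat]
  have h := hX.identDistrib_apply hXm (φ := r • ContinuousLinearMap.id ℝ 𝓗)
    (MulAction.bijective (Units.mk0 r hr.ne')) (fun f g hfg => by simp [norm_smul, hfg]) f
  rwa [hnorm, hrpow] at h

lemma integral_smul [Nontrivial 𝓗] (hX : IsStronglySelfSimilar X H μ)
    (hXm : ∀ f, AEMeasurable (X f) μ) {r : ℝ} (hr : 0 < r) (f : 𝓗) :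
    ∫ ω, X (r • f) ω ∂μ = r ^ (2 * H) * ∫ ω, X f ω ∂μ :=
  (hX.identDistrib_smul hXm hr f).integral_eq.trans (integral_const_mul _ _)

lemma integral_sq_smul [Nontrivial 𝓗] (hX : IsStronglySelfSimilar X H μ)
    (hXm : ∀ f, AEMeasurable (X f) μ) {r : ℝ} (hr : 0 < r) (f : 𝓗) :
    ∫ ω, X (r • f) ω ^ 2 ∂μ = r ^ (4 * H) * ∫ ω, X f ω ^ 2 ∂μ := by
  have hpow : (r ^ (2 * H)) ^ 2 = r ^ (4 * H) := by
    rw [← Real.rpow_natCast, ← Real.rpow_mul hr.le]; ring_nf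
  rw [(hX.identDistrib_smul hXm hr f).integral_sq_eq, ← hpow, ← integral_const_mul]
  simp only [mul_pow]

lemma apply_zero_ae_eq_zero [Nontrivial 𝓗] (hX : IsStronglySelfSimilar X H μ)
    (hXm : ∀ f, AEMeasurable (X f) μ) (hH : H ≠ 0) (hX0 : Integrable (fun ω => X 0 ω ^ 2) μ) :
    X 0 =ᵐ[μ] 0 := by
  have hscale : ∫ ω, X 0 ω ^ 2 ∂μ = (2 : ℝ) ^ (4 * H) * ∫ ω, X 0 ω ^ 2 ∂μ := by
    simpa only [smul_zero] using hX.integral_sq_smul hXm two_pos 0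
  have hne : (2 : ℝ) ^ (4 * H) ≠ 1 := by
    rw [Ne, ← Real.rpow_zero (2 : ℝ), Real.rpow_right_inj two_pos (by norm_num)]
    exact mul_ne_zero four_ne_zero hH
  have hzero : ∫ ω, X 0 ω ^ 2 ∂μ = 0 := by
    by_contra hpos
    exact hne (mul_right_cancel₀ hpos (by rw [one_mul, ← hscale]))
  have hsq := (integral_eq_zero_iff_of_nonneg (fun ω => sq_nonneg (X 0 ω)) hX0).mp hzero
  filter_upwards [hsq] with ω hω
  simpa using hω

end NormedSpace

variable [InnerProductSpace ℝ 𝓗] [Nontrivial 𝓗]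

lemma identDistrib_of_norm_eq (hX : IsStronglySelfSimilar X H μ)
    (hXm : ∀ f, AEMeasurable (X f) μ) {f g : 𝓗} (hfg : ‖f‖ = ‖g‖) :
    IdentDistrib (X f) (X g) μ μ := by
  set e := (ℝ ∙ (g - f))ᗮ.reflection
  have h := hX.identDistrib_apply hXm (φ := e.toContinuousLinearEquiv.toContinuousLinearMap)
    e.bijective (fun x y hxy => by simpa using hxy) g
  rw [e.norm_toContinuousLinearMap] at h
  simpa [e, Submodule.reflection_sub hfg.symm] using h

lemma integral_eq_zero (hX : IsStronglySelfSimilar X H μ) (hI : HasStationaryIncrements X μ)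
    (hXi : ∀ f, Integrable (X f) μ) (h0 : X 0 =ᵐ[μ] 0) (f : 𝓗) : ∫ ω, X f ω ∂μ = 0 := by
  have hXm : ∀ f, AEMeasurable (X f) μ := fun f => (hXi f).aemeasurable
  have hneg : ∫ ω, X (-f) ω ∂μ = ∫ ω, X f ω ∂μ :=
    (hX.identDistrib_of_norm_eq hXm (norm_neg f)).integral_eq
  have hdouble : (2 : ℝ) ^ (2 * H) * ∫ ω, X f ω ∂μ = 0 := by
    rw [← hX.integral_smul hXm two_pos, two_smul, ← sub_neg_eq_add,
      (hI.identDistrib_sub hXm h0 f (-f)).integral_eq, integral_sub (hXi f) (hXi (-f)), hneg,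
      sub_self]
  exact (mul_eq_zero.mp hdouble).resolve_left (by positivity)

lemma integral_sq_eq_mul_norm_rpow (hX : IsStronglySelfSimilar X H μ)
    (hXm : ∀ f, AEMeasurable (X f) μ) (hH : H ≠ 0) (h0 : X 0 =ᵐ[μ] 0) {u : 𝓗} (hu : ‖u‖ = 1)
    (f : 𝓗) : ∫ ω, X f ω ^ 2 ∂μ = (∫ ω, X u ω ^ 2 ∂μ) * ‖f‖ ^ (4 * H) := by
  rcases eq_or_ne f 0 with rfl | hf
  · rw [norm_zero, Real.zero_rpow (by positivity), mul_zero]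
    exact integral_eq_zero_of_ae (by filter_upwards [h0] with ω hω; simp [hω])
  have hnorm : 0 < ‖f‖ := norm_pos_iff.mpr hf
  have hunit : ‖u‖ = ‖‖f‖⁻¹ • f‖ := hu.trans (norm_smul_inv_norm hf).symm
  calc ∫ ω, X f ω ^ 2 ∂μ = ∫ ω, X (‖f‖ • ‖f‖⁻¹ • f) ω ^ 2 ∂μ := by
        rw [smul_inv_smul₀ hnorm.ne']
    _ = ‖f‖ ^ (4 * H) * ∫ ω, X u ω ^ 2 ∂μ := by
        rw [hX.integral_sq_smul hXm hnorm, (hX.identDistrib_of_norm_eq hXm hunit).integral_sq_eq]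
    _ = (∫ ω, X u ω ^ 2 ∂μ) * ‖f‖ ^ (4 * H) := mul_comm _ _

end IsStronglySelfSimilar

end

theorem L2fBm_characterization_weak_general
    (𝓗 : Type*) [NormedAddCommGroup 𝓗] [InnerProductSpace ℝ 𝓗]
    [Nontrivial 𝓗]
    (H : ℝ) (hH : H ∈ Set.Ioo (0 : ℝ) 1)
    (Ω : Type*) [MeasurableSpace Ω] (ℙ : Measure Ω) [IsProbabilityMeasure ℙ]
    (X : 𝓗 → Ω → ℝ)
    (hX : ∀ f : 𝓗, MemLp (X f) 2 ℙ)
    (hSS2 : ∀ φ : 𝓗 →L[ℝ] 𝓗, Function.Bijective φ →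
      (∀ f g : 𝓗, ‖f‖ = ‖g‖ → ‖φ f‖ = ‖φ g‖) →
      ∀ (n : ℕ) (f : Fin n → 𝓗),
        Measure.map (fun ω => fun i => X (φ (f i)) ω) ℙ =
          Measure.map (fun ω => fun i => (‖φ‖ ^ 2) ^ H * X (f i) ω) ℙ)
    (hSI2 : ∀ (h : 𝓗) (n : ℕ) (f g : Fin n → 𝓗),
      Measure.map (fun ω => fun i => X (f i + h) ω - X (g i + h) ω) ℙ =
        Measure.map (fun ω => fun i => X (f i) ω - X (g i) ω) ℙ) :
    (∀ f : 𝓗, ∫ ω, X f ω ∂ℙ = 0) ∧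
    ∃ σ2 : ℝ, 0 ≤ σ2 ∧
      (∀ f₀ : 𝓗, ‖f₀‖ = 1 → ∫ ω, X f₀ ω ^ 2 ∂ℙ = σ2) ∧
      (∀ f g : 𝓗, ∫ ω, X f ω * X g ω ∂ℙ =
        σ2 * ((‖f‖ ^ (4 * H) + ‖g‖ ^ (4 * H) - ‖f - g‖ ^ (4 * H)) / 2)) := by
  have hSS : IsStronglySelfSimilar X H ℙ := hSS2
  have hSI : HasStationaryIncrements X ℙ := hSI2
  have hH0 : H ≠ 0 := hH.1.ne'
  have hXm : ∀ f, AEMeasurable (X f) ℙ := fun f => (hX f).aemeasurable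
  have h0 : X 0 =ᵐ[ℙ] 0 := hSS.apply_zero_ae_eq_zero hXm hH0 (hX 0).integrable_sq
  obtain ⟨u, hu⟩ := exists_norm_eq 𝓗 zero_le_one
  refine ⟨hSS.integral_eq_zero hSI (fun f => (hX f).integrable one_le_two) h0,
    ∫ ω, X u ω ^ 2 ∂ℙ, integral_nonneg fun ω => sq_nonneg _,
    fun f₀ hf₀ => (hSS.identDistrib_of_norm_eq hXm (hf₀.trans hu.symm)).integral_sq_eq,
    fun f g => ?_⟩
  have hvar := hSS.integral_sq_eq_mul_norm_rpow hXm hH0 h0 hu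
  rw [integral_mul_eq_integral_sq_add_integral_sq_sub_integral_sub_sq_div_two (hX f) (hX g),
    ← (hSI.identDistrib_sub hXm h0 f g).integral_sq_eq, hvar f, hvar g, hvar (f - g)]
  ring

/-- **Characterization of the `L²`-indexed fractional Brownian motion, second version.**
If a square-integrable process `X` indexed by a nontrivial real Hilbert space `𝓗` is strongly
`H`-self-similar (SS2) with respect to the group `𝒢` of continuous linear bijections
preserving equality of norms (with `ρ(φ) = ‖φ‖²`), and weakly `L²`-increment stationary (SI2),
then `X` is centered and its covariance is `σ² ½(‖f‖^{4H} + ‖g‖^{4H} − ‖f − g‖^{4H})` where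
`σ² = E[X f₀ ²]` for any unit vector `f₀`. -/
theorem L2fBm_characterization_weak
    (𝓗 : Type*) [NormedAddCommGroup 𝓗] [InnerProductSpace ℝ 𝓗] [CompleteSpace 𝓗]
    [Nontrivial 𝓗]
    (H : ℝ) (hH : H ∈ Set.Ioo (0 : ℝ) 1)
    (Ω : Type*) [MeasurableSpace Ω] (ℙ : Measure Ω) [IsProbabilityMeasure ℙ]
    (X : 𝓗 → Ω → ℝ)
    (hX : ∀ f : 𝓗, MemLp (X f) 2 ℙ)
    (hSS2 : ∀ φ : 𝓗 →L[ℝ] 𝓗, Function.Bijective φ →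
      (∀ f g : 𝓗, ‖f‖ = ‖g‖ → ‖φ f‖ = ‖φ g‖) →
      ∀ (n : ℕ) (f : Fin n → 𝓗),
        Measure.map (fun ω => fun i => X (φ (f i)) ω) ℙ =
          Measure.map (fun ω => fun i => (‖φ‖ ^ 2) ^ H * X (f i) ω) ℙ)
    (hSI2 : ∀ (h : 𝓗) (n : ℕ) (f g : Fin n → 𝓗),
      Measure.map (fun ω => fun i => X (f i + h) ω - X (g i + h) ω) ℙ =
        Measure.map (fun ω => fun i => X (f i) ω - X (g i) ω) ℙ) :
    (∀ f : 𝓗, ∫ ω, X f ω ∂ℙ = 0) ∧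
    ∃ σ2 : ℝ, 0 ≤ σ2 ∧
      (∀ f₀ : 𝓗, ‖f₀‖ = 1 → ∫ ω, X f₀ ω ^ 2 ∂ℙ = σ2) ∧
      (∀ f g : 𝓗, ∫ ω, X f ω * X g ω ∂ℙ =
        σ2 * ((‖f‖ ^ (4 * H) + ‖g‖ ^ (4 * H) - ‖f - g‖ ^ (4 * H)) / 2)) :=
  L2fBm_characterization_weak_general 𝓗 H hH Ω ℙ X hX hSS2 hSI2
end

section
/- Let E be a real normed space equipped with its Borel σ-algebra, m a finite Borel measure on E with m({0}) = 0, and Q : E* → ℝ a function on the continuous real-linear functionals satisfying the parallelogram identity Q(ξ + η) + Q(ξ − η) = 2Q(ξ) + 2Q(η) for all ξ, η. Define Φ(ξ) := Q(ξ) + 2∫_E (1 − cos ξ(x)) / min(1, ‖x‖²) dm(x). Then for all ξ, η ∈ E*: 2Φ(ξ) + 2Φ(η) − Φ(ξ + η) − Φ(ξ − η) = ∫_E |exp(i·ξ(x)) + exp(i·η(x)) − exp(i·(ξ+η)(x)) − 1|² / min(1, ‖x‖²) dm(x). -/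
/-!
Writing `a = ξ x`, `b = η x`, the integrand's numerator factors as
`-(e^{ia} - 1)(e^{ib} - 1)`, so its squared modulus is `4 (1 - cos a)(1 - cos b)`, which by the
addition formulas equals the second difference
`4(1 - cos a) + 4(1 - cos b) - 2(1 - cos (a + b)) - 2(1 - cos (a - b))`. Integrating and using the
parallelogram law to cancel the `Q` terms gives the identity.
-/

open MeasureTheory Complex

lemma norm_exp_I_mul_ofReal_sub_one_sq (a : ℝ) :
    ‖exp (I * a) - 1‖ ^ 2 = 2 * (1 - Real.cos a) := by
  rw [norm_exp_I_mul_ofReal_sub_one, Real.norm_eq_abs, sq_abs, mul_pow,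
    Real.sin_sq_eq_half_sub]
  ring_nf

lemma norm_exp_add_exp_sub_exp_add_sub_one_sq (a b : ℝ) :
    ‖exp (I * a) + exp (I * b) - exp (I * ((a + b : ℝ) : ℂ)) - 1‖ ^ 2 =
      4 * (1 - Real.cos a) * (1 - Real.cos b) := by
  have hfactor : exp (I * a) + exp (I * b) - exp (I * ((a + b : ℝ) : ℂ)) - 1 =
      -((exp (I * a) - 1) * (exp (I * b) - 1)) := by
    rw [ofReal_add, mul_add, exp_add]; ring
  rw [hfactor, norm_neg, norm_mul, mul_pow, norm_exp_I_mul_ofReal_sub_one_sq,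
    norm_exp_I_mul_ofReal_sub_one_sq]
  ring

lemma four_mul_one_sub_cos_mul_one_sub_cos (a b : ℝ) :
    4 * (1 - Real.cos a) * (1 - Real.cos b) =
      4 * (1 - Real.cos a) + 4 * (1 - Real.cos b)
        - 2 * (1 - Real.cos (a + b)) - 2 * (1 - Real.cos (a - b)) := by
  rw [Real.cos_add, Real.cos_sub]; ring

lemma one_sub_cos_le_min (t : ℝ) : 1 - Real.cos t ≤ min 2 (t ^ 2 / 2) :=
  le_min (by linarith [Real.neg_one_le_cos t])
    (by linarith [Real.one_sub_sq_div_two_le_cos (x := t)])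

lemma min_le_max_mul_min {c s : ℝ} (hs : 0 ≤ s) :
    min 2 (c * s) ≤ max 2 c * min 1 s := by
  rcases le_total 1 s with h | h
  · rw [min_eq_left h, mul_one]; exact (min_le_left _ _).trans (le_max_left _ _)
  · rw [min_eq_right h]
    exact (min_le_right _ _).trans (mul_le_mul_of_nonneg_right (le_max_right _ _) hs)

section NormedSpace

variable {E : Type*} [SeminormedAddCommGroup E] [NormedSpace ℝ E]

lemma one_sub_cos_le_mul_min (ℓ : E →L[ℝ] ℝ) (x : E) :
    1 - Real.cos (ℓ x) ≤ max 2 (‖ℓ‖ ^ 2 / 2) * min 1 (‖x‖ ^ 2) := by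
  have hℓx : (ℓ x) ^ 2 / 2 ≤ ‖ℓ‖ ^ 2 / 2 * ‖x‖ ^ 2 := by
    have := sq_le_sq' (abs_le.mp (ℓ.le_opNorm x)).1 (abs_le.mp (ℓ.le_opNorm x)).2
    nlinarith
  calc 1 - Real.cos (ℓ x) ≤ min 2 ((ℓ x) ^ 2 / 2) := one_sub_cos_le_min _
    _ ≤ min 2 (‖ℓ‖ ^ 2 / 2 * ‖x‖ ^ 2) := min_le_min_left _ hℓx
    _ ≤ _ := min_le_max_mul_min (by positivity)

lemma integrable_one_sub_cos_div_min [MeasurableSpace E] [OpensMeasurableSpace E]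
    (m : Measure E) [IsFiniteMeasure m] (ℓ : E →L[ℝ] ℝ) :
    Integrable (fun x => (1 - Real.cos (ℓ x)) / min 1 (‖x‖ ^ 2)) m := by
  refine Integrable.mono' (integrable_const (max 2 (‖ℓ‖ ^ 2 / 2)))
    (Measurable.aestronglyMeasurable (by fun_prop)) ?_
  refine Filter.Eventually.of_forall fun x => ?_
  rw [Real.norm_eq_abs, abs_of_nonneg (div_nonneg (by linarith [Real.cos_le_one (ℓ x)])
    (by positivity))]
  exact div_le_of_le_mul₀ (by positivity) (by positivity) (one_sub_cos_le_mul_min ℓ x)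

end NormedSpace

theorem drift_additivity_identity_general
    (E : Type*) [NormedAddCommGroup E] [NormedSpace ℝ E]
    [MeasurableSpace E] [BorelSpace E]
    (m : Measure E) [IsFiniteMeasure m]
    (Q : (E →L[ℝ] ℝ) → ℝ)
    (hQ : ∀ ξ η : E →L[ℝ] ℝ, Q (ξ + η) + Q (ξ - η) = 2 * Q ξ + 2 * Q η)
    (Φ : (E →L[ℝ] ℝ) → ℝ)
    (hΦ : ∀ ξ : E →L[ℝ] ℝ,
      Φ ξ = Q ξ + 2 * ∫ x, (1 - Real.cos (ξ x)) / min 1 (‖x‖ ^ 2) ∂m) :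
    ∀ ξ η : E →L[ℝ] ℝ,
      2 * Φ ξ + 2 * Φ η - Φ (ξ + η) - Φ (ξ - η) =
        ∫ x, ‖Complex.exp (Complex.I * (ξ x : ℂ)) +
            Complex.exp (Complex.I * (η x : ℂ)) -
            Complex.exp (Complex.I * ((ξ + η) x : ℂ)) - 1‖ ^ 2 / min 1 (‖x‖ ^ 2) ∂m := by
  intro ξ η
  set g : (E →L[ℝ] ℝ) → E → ℝ := fun ℓ x => (1 - Real.cos (ℓ x)) / min 1 (‖x‖ ^ 2)
  have hg : ∀ ℓ, Integrable (g ℓ) m := integrable_one_sub_cos_div_min m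
  have hpointwise : ∀ x, ‖Complex.exp (Complex.I * (ξ x : ℂ)) +
      Complex.exp (Complex.I * (η x : ℂ)) -
      Complex.exp (Complex.I * ((ξ + η) x : ℂ)) - 1‖ ^ 2 / min 1 (‖x‖ ^ 2) =
      4 * g ξ x + 4 * g η x - 2 * g (ξ + η) x - 2 * g (ξ - η) x := by
    intro x
    simp only [g, add_apply, sub_apply]
    rw [norm_exp_add_exp_sub_exp_add_sub_one_sq, four_mul_one_sub_cos_mul_one_sub_cos]
    ring
  rw [integral_congr_ae (Filter.Eventually.of_forall hpointwise),
    integral_sub (by fun_prop) (by fun_prop), integral_sub (by fun_prop) (by fun_prop),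
    integral_add (by fun_prop) (by fun_prop), integral_const_mul, integral_const_mul,
    integral_const_mul, integral_const_mul, hΦ, hΦ, hΦ, hΦ]
  linarith [hQ ξ η]

/-- **Additivity of the drift part: the key quadratic identity.**
Let `E` be a real normed space with its Borel σ-algebra, `m` a finite Borel measure with
`m {0} = 0`, and `Q` a quadratic (parallelogram) functional on `E*`. For
`Φ ξ = Q ξ + 2 ∫ (1 − cos ξ x) / min 1 ‖x‖² dm`, one has for all `ξ, η`:
`2Φ(ξ) + 2Φ(η) − Φ(ξ+η) − Φ(ξ−η)
  = ∫ |exp(iξx) + exp(iηx) − exp(i(ξ+η)x) − 1|² / min 1 ‖x‖² dm`. -/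
theorem drift_additivity_identity
    (E : Type*) [NormedAddCommGroup E] [NormedSpace ℝ E]
    [MeasurableSpace E] [BorelSpace E]
    (m : Measure E) [IsFiniteMeasure m] (hm0 : m {0} = 0)
    (Q : (E →L[ℝ] ℝ) → ℝ)
    (hQ : ∀ ξ η : E →L[ℝ] ℝ, Q (ξ + η) + Q (ξ - η) = 2 * Q ξ + 2 * Q η)
    (Φ : (E →L[ℝ] ℝ) → ℝ)
    (hΦ : ∀ ξ : E →L[ℝ] ℝ,
      Φ ξ = Q ξ + 2 * ∫ x, (1 - Real.cos (ξ x)) / min 1 (‖x‖ ^ 2) ∂m) :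
    ∀ ξ η : E →L[ℝ] ℝ,
      2 * Φ ξ + 2 * Φ η - Φ (ξ + η) - Φ (ξ - η) =
        ∫ x, ‖Complex.exp (Complex.I * (ξ x : ℂ)) +
            Complex.exp (Complex.I * (η x : ℂ)) -
            Complex.exp (Complex.I * ((ξ + η) x : ℂ)) - 1‖ ^ 2 / min 1 (‖x‖ ^ 2) ∂m :=
  drift_additivity_identity_general E m Q hQ Φ hΦ
end

section
/- Let H ∈ (0, 1/2], d ≥ 1, and let λ denote Lebesgue measure on ℝ^d. Let (Ω, ℱ, ℙ) be a probability space and X : ℝ₊^d → Ω → ℝ a process such that: (i) for every pair s, u ∈ ℝ₊^d, the joint law on ℝ² of ω ↦ (X(s)(ω), X(u)(ω)) is a centered Gaussian measure; (ii) for all s, u ∈ ℝ₊^d, E[X(s)·X(u)] = ½(λ([0,s])^{2H} + λ([0,u])^{2H} − λ([0,s] △ [0,u])^{2H}), where [0,s] = ∏_k [0, s_k] and △ denotes symmetric difference. Then for all t, t', τ ∈ ℝ₊^d with t ≼ t' (componentwise) and λ([0,t'] \ [0,t]) = λ([0,τ]), the law of X(t') − X(t) equals the law of X(τ). -/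
/-! Both `X t' - X t` and `X τ` are centered Gaussian, being linear images of Gaussian pairs, so
their laws are determined by their second moments. Expanding the square, the covariance gives
`E[(X s - X u)²] = λ([0,s] ∆ [0,u])^{2H}`; for `t ≼ t'` the symmetric difference is
`[0,t'] \ [0,t]`, of the same measure as `[0,τ]`, and `E[X τ²] = λ([0,τ])^{2H}`. -/

open MeasureTheory

/-- A measure on `Fin 2 → ℝ` is a centered Gaussian law if all its one-dimensional
continuous linear projections are (possibly degenerate) centered Gaussian laws on `ℝ`. -/
def IsCenteredGaussianLaw2 (μ : Measure (Fin 2 → ℝ)) : Prop :=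
  ∀ l : (Fin 2 → ℝ) →L[ℝ] ℝ, ∃ v : NNReal,
    μ.map l = ProbabilityTheory.gaussianReal 0 v

open scoped NNReal

section

open ProbabilityTheory

variable {Ω : Type*} [MeasurableSpace Ω] {P : Measure Ω}

namespace IsCenteredGaussianLaw2

variable {f : Ω → Fin 2 → ℝ}

lemma aemeasurable [NeZero P] (h : IsCenteredGaussianLaw2 (P.map f)) : AEMeasurable f P := by
  by_contra hf
  obtain ⟨v, hv⟩ := h 0
  rw [Measure.map_of_not_aemeasurable hf, Measure.map_zero] at hv
  exact IsProbabilityMeasure.ne_zero _ hv.symm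

lemma exists_hasLaw_comp [NeZero P] (h : IsCenteredGaussianLaw2 (P.map f))
    (l : (Fin 2 → ℝ) →L[ℝ] ℝ) : ∃ v : ℝ≥0, HasLaw (fun ω ↦ l (f ω)) (gaussianReal 0 v) P := by
  obtain ⟨v, hv⟩ := h l
  refine ⟨v, l.continuous.measurable.comp_aemeasurable h.aemeasurable, ?_⟩
  rw [← hv, AEMeasurable.map_map_of_aemeasurable l.continuous.aemeasurable h.aemeasurable]
  rfl

variable {Y Z : Ω → ℝ}

lemma exists_hasLaw_fst [NeZero P] (h : IsCenteredGaussianLaw2 (P.map fun ω ↦ ![Y ω, Z ω])) :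
    ∃ v : ℝ≥0, HasLaw Y (gaussianReal 0 v) P := by
  simpa using h.exists_hasLaw_comp (.proj 0)

lemma exists_hasLaw_sub [NeZero P] (h : IsCenteredGaussianLaw2 (P.map fun ω ↦ ![Y ω, Z ω])) :
    ∃ v : ℝ≥0, HasLaw (fun ω ↦ Y ω - Z ω) (gaussianReal 0 v) P := by
  simpa using h.exists_hasLaw_comp (.proj 0 - .proj 1)

end IsCenteredGaussianLaw2

namespace ProbabilityTheory.HasLaw

variable {f g : Ω → ℝ} {v w : ℝ≥0}

lemma memLp_two_of_gaussianReal (h : HasLaw f (gaussianReal 0 v) P) : MemLp f 2 P := by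
  have := memLp_id_gaussianReal (μ := 0) (v := v) 2
  rw [← h.map_eq] at this
  exact (memLp_map_measure_iff aestronglyMeasurable_id h.aemeasurable).1 this

lemma integral_sq_of_gaussianReal (h : HasLaw f (gaussianReal 0 v) P) :
    ∫ ω, f ω ^ 2 ∂P = v := by
  calc ∫ ω, f ω ^ 2 ∂P = ∫ x, x ^ 2 ∂gaussianReal 0 v :=
      h.integral_comp (continuous_pow 2).aestronglyMeasurable
    _ = Var[id; gaussianReal 0 v] := by
      simp [variance_eq_integral aemeasurable_id, integral_id_gaussianReal]
    _ = v := variance_id_gaussianReal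

lemma map_eq_map_of_integral_sq_eq (hf : HasLaw f (gaussianReal 0 v) P)
    (hg : HasLaw g (gaussianReal 0 w) P) (h : ∫ ω, f ω ^ 2 ∂P = ∫ ω, g ω ^ 2 ∂P) :
    P.map f = P.map g := by
  rw [hf.integral_sq_of_gaussianReal, hg.integral_sq_of_gaussianReal, NNReal.coe_inj] at h
  rw [hf.map_eq, hg.map_eq, h]

end ProbabilityTheory.HasLaw

lemma integral_sub_sq [IsFiniteMeasure P] {f g : Ω → ℝ} (hf : MemLp f 2 P) (hg : MemLp g 2 P) :
    ∫ ω, (f ω - g ω) ^ 2 ∂P =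
      ∫ ω, f ω * f ω ∂P - 2 * ∫ ω, f ω * g ω ∂P + ∫ ω, g ω * g ω ∂P := by
  have hff : Integrable (fun ω ↦ f ω * f ω) P := hf.integrable_mul hf
  have hfg : Integrable (fun ω ↦ 2 * (f ω * g ω)) P := (hf.integrable_mul hg).const_mul 2
  have hgg : Integrable (fun ω ↦ g ω * g ω) P := hg.integrable_mul hg
  calc ∫ ω, (f ω - g ω) ^ 2 ∂P = ∫ ω, f ω * f ω - 2 * (f ω * g ω) + g ω * g ω ∂P := by
        congr with ω; ring
    _ = _ := by
        rw [integral_add (f := fun ω ↦ f ω * f ω - 2 * (f ω * g ω)) (hff.sub hfg) hgg,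
          integral_sub hff hfg, integral_const_mul]

section SetIndexedFBm

variable {α : Type*} [MeasurableSpace α] (μ : Measure α)

noncomputable def setIndexedFBmCovariance (H : ℝ) (A B : Set α) : ℝ :=
  ((μ A).toReal ^ (2 * H) + (μ B).toReal ^ (2 * H) - (μ (symmDiff A B)).toReal ^ (2 * H)) / 2

variable {H : ℝ}

lemma setIndexedFBmCovariance_self (hH : H ≠ 0) (A : Set α) :
    setIndexedFBmCovariance μ H A A = (μ A).toReal ^ (2 * H) := by
  simp [setIndexedFBmCovariance, Real.zero_rpow (mul_ne_zero two_ne_zero hH)]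

lemma setIndexedFBmCovariance_increment (hH : H ≠ 0) (A B : Set α) :
    setIndexedFBmCovariance μ H A A - 2 * setIndexedFBmCovariance μ H A B +
        setIndexedFBmCovariance μ H B B = (μ (symmDiff A B)).toReal ^ (2 * H) := by
  rw [setIndexedFBmCovariance_self μ hH, setIndexedFBmCovariance_self μ hH,
    setIndexedFBmCovariance]
  ring

end SetIndexedFBm

end

theorem mpfBm_measure_increment_stationarity_general
    (H : ℝ) (hH : H ∈ Set.Ioc (0 : ℝ) (1 / 2))
    (d : ℕ)
    (Ω : Type*) [MeasurableSpace Ω] (ℙ : Measure Ω) [IsProbabilityMeasure ℙ]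
    (X : (Fin d → ℝ) → Ω → ℝ)
    (hGauss : ∀ s u : Fin d → ℝ, 0 ≤ s → 0 ≤ u →
      IsCenteredGaussianLaw2 (Measure.map (fun ω => ![X s ω, X u ω]) ℙ))
    (hcov : ∀ s u : Fin d → ℝ, 0 ≤ s → 0 ≤ u →
      ∫ ω, X s ω * X u ω ∂ℙ =
        ((volume (Set.Icc 0 s)).toReal ^ (2 * H) + (volume (Set.Icc 0 u)).toReal ^ (2 * H) -
          (volume (symmDiff (Set.Icc 0 s) (Set.Icc 0 u))).toReal ^ (2 * H)) / 2) :
    ∀ t t' τ : Fin d → ℝ, 0 ≤ t → t ≤ t' → 0 ≤ τ →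
      volume (Set.Icc 0 t' \ Set.Icc 0 t) = volume (Set.Icc 0 τ) →
      Measure.map (fun ω => X t' ω - X t ω) ℙ = Measure.map (X τ) ℙ := by
  intro t t' τ ht htt' hτ hvol
  have ht' : 0 ≤ t' := ht.trans htt'
  have hH₀ : H ≠ 0 := hH.1.ne'
  have hmom (s u : Fin d → ℝ) (hs : 0 ≤ s) (hu : 0 ≤ u) : ∫ ω, X s ω * X u ω ∂ℙ =
      setIndexedFBmCovariance volume H (Set.Icc 0 s) (Set.Icc 0 u) := hcov s u hs hu
  have hL2 (s : Fin d → ℝ) (hs : 0 ≤ s) : MemLp (X s) 2 ℙ := by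
    obtain ⟨v, hv⟩ := (hGauss s s hs hs).exists_hasLaw_fst
    exact hv.memLp_two_of_gaussianReal
  obtain ⟨v, hincrement⟩ := (hGauss t' t ht' ht).exists_hasLaw_sub
  obtain ⟨w, hτ_law⟩ := (hGauss τ τ hτ hτ).exists_hasLaw_fst
  refine hincrement.map_eq_map_of_integral_sq_eq hτ_law ?_
  calc ∫ ω, (X t' ω - X t ω) ^ 2 ∂ℙ
      = (volume (symmDiff (Set.Icc 0 t') (Set.Icc 0 t))).toReal ^ (2 * H) := by
        rw [integral_sub_sq (hL2 t' ht') (hL2 t ht), hmom t' t' ht' ht', hmom t' t ht' ht,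
          hmom t t ht ht, setIndexedFBmCovariance_increment volume hH₀]
    _ = ∫ ω, X τ ω ^ 2 ∂ℙ := by
        simp_rw [symmDiff_of_ge (Set.Icc_subset_Icc_right htt'), hvol, pow_two,
          hmom τ τ hτ hτ, setIndexedFBmCovariance_self volume hH₀]

/-- **Measure increment stationarity of the multiparameter fractional Brownian motion.**
For `H ∈ (0, 1/2]`, a process on `ℝ₊^d` whose two-dimensional marginals are centered Gaussian
and whose covariance is `½(λ[0,s]^{2H} + λ[0,u]^{2H} − λ([0,s] ∆ [0,u])^{2H})` satisfies: if
`t ≼ t'` and `λ([0,t'] \ [0,t]) = λ([0,τ])`, then `X t' − X t` has the law of `X τ`. -/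
theorem mpfBm_measure_increment_stationarity
    (H : ℝ) (hH : H ∈ Set.Ioc (0 : ℝ) (1 / 2))
    (d : ℕ) (hd : 1 ≤ d)
    (Ω : Type*) [MeasurableSpace Ω] (ℙ : Measure Ω) [IsProbabilityMeasure ℙ]
    (X : (Fin d → ℝ) → Ω → ℝ)
    (hGauss : ∀ s u : Fin d → ℝ, 0 ≤ s → 0 ≤ u →
      IsCenteredGaussianLaw2 (Measure.map (fun ω => ![X s ω, X u ω]) ℙ))
    (hcov : ∀ s u : Fin d → ℝ, 0 ≤ s → 0 ≤ u →
      ∫ ω, X s ω * X u ω ∂ℙ =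
        ((volume (Set.Icc 0 s)).toReal ^ (2 * H) + (volume (Set.Icc 0 u)).toReal ^ (2 * H) -
          (volume (symmDiff (Set.Icc 0 s) (Set.Icc 0 u))).toReal ^ (2 * H)) / 2) :
    ∀ t t' τ : Fin d → ℝ, 0 ≤ t → t ≤ t' → 0 ≤ τ →
      volume (Set.Icc 0 t' \ Set.Icc 0 t) = volume (Set.Icc 0 τ) →
      Measure.map (fun ω => X t' ω - X t ω) ℙ = Measure.map (X τ) ℙ :=
  mpfBm_measure_increment_stationarity_general H hH d Ω ℙ X hGauss hcov
end
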